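/- arXiv:2503.02952 — 5 statements merged into one kernel-verified Lean document; each statement's English description precedes it below -/
import Mathlib

section
/- Fix a horizon T > 0 and slope α > 0 with α·T ≥ 2, and let s = T − √(2T/α). Then for every threshold θ ∈ [0, T], the switch-point-s strategy satisfies r(s, θ) / OPT(θ) ≥ √(2/(α·T)); that is, the strategy that explores the striving arm until time T − √(2T/α) and then switches achieves competitive ratio at least √(2/(α·T)) uniformly over all possible thresholds θ. -/
/-- Reward of the switch-point-`s` strategy in the improving two-armed bandit:
if `θ ≤ s` the agent witnesses the increase and earns `(α/2)(T-θ)²`;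
otherwise it switches to the stable arm and earns `T - s`. -/
noncomputable def reward (T α s θ : ℝ) : ℝ :=
  if θ ≤ s then α / 2 * (T - θ) ^ 2 else T - s

/-- Optimal hindsight reward. -/
noncomputable def OPT (T α θ : ℝ) : ℝ :=
  max T (α / 2 * (T - θ) ^ 2)

/-!
Write `c = √(2T/α)`, the gap at which `(α/2) c² = T`, so that `s = T - c`. If `θ ≤ s` the
striving arm pays at least `(α/2) c² = T` and the strategy earns `OPT(θ)` exactly. If `θ > s`
then `T - θ < c`, so `OPT(θ) = T` while the strategy earns `c`, a ratio `c / T = √(2/(αT))`,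
which is at most `1` precisely because `αT ≥ 2`.
-/

section SwitchPoint

variable {T α s θ : ℝ}

theorem reward_div_OPT_of_le (hT : 0 < T) (hα : 0 ≤ α) (hsT : s ≤ T)
    (hbreak : T ≤ α / 2 * (T - s) ^ 2) (hθs : θ ≤ s) :
    reward T α s θ / OPT T α θ = 1 := by
  have hstriving : T ≤ α / 2 * (T - θ) ^ 2 := hbreak.trans (by gcongr)
  rw [reward, if_pos hθs, OPT, max_eq_right hstriving]
  exact div_self (hT.trans_le hstriving).ne'

theorem reward_div_OPT_of_lt (hα : 0 ≤ α) (hbreak : α / 2 * (T - s) ^ 2 ≤ T)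
    (hsθ : s < θ) (hθT : θ ≤ T) :
    reward T α s θ / OPT T α θ = (T - s) / T := by
  have hstable : α / 2 * (T - θ) ^ 2 ≤ T := le_trans (by gcongr) hbreak
  rw [reward, if_neg hsθ.not_ge, OPT, max_eq_left hstable]

end SwitchPoint

theorem stmt0 (T α : ℝ) (hT : 0 < T) (hα : 0 < α) (hαT : 2 ≤ α * T)
    (s : ℝ) (hs : s = T - Real.sqrt (2 * T / α)) :
    ∀ θ ∈ Set.Icc (0 : ℝ) T,
      Real.sqrt (2 / (α * T)) ≤ reward T α s θ / OPT T α θ := by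
  rintro θ ⟨-, hθT⟩
  have hgap : T - s = Real.sqrt (2 * T / α) := by rw [hs, sub_sub_cancel]
  have hs_le : s ≤ T := sub_nonneg.mp (hgap ▸ Real.sqrt_nonneg _)
  have hbreak : α / 2 * (T - s) ^ 2 = T := by
    rw [hgap, Real.sq_sqrt (by positivity)]
    field_simp
  have hgap_le : T - s ≤ T := by
    rw [hgap, Real.sqrt_le_iff, div_le_iff₀ hα]
    exact ⟨hT.le, by nlinarith⟩
  have hratio : Real.sqrt (2 / (α * T)) = (T - s) / T := by
    rw [hgap, show 2 / (α * T) = 2 * T / α / T ^ 2 by field_simp,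
      Real.sqrt_div' _ (sq_nonneg T), Real.sqrt_sq hT.le]
  rw [hratio]
  rcases le_or_gt θ s with hθs | hsθ
  · rw [reward_div_OPT_of_le hT hα.le hs_le hbreak.ge hθs]
    exact (div_le_one hT).mpr hgap_le
  · rw [reward_div_OPT_of_lt hα.le hbreak.le hsθ hθT]
end

section
/- Fix a horizon T > 0 and slope α > 0 with α·T ≥ 2. For every switch point s' ∈ [0, T] there exists a threshold θ ∈ [0, T] such that r(s', θ) / OPT(θ) ≤ √(2/(α·T)). Hence no switch-point strategy achieves a worst-case competitive ratio better than √(2/(α·T)). -/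
section CompetitiveRatio

variable {T α s θ c : ℝ}

lemma reward_of_lt (h : s < θ) : reward T α s θ = T - s :=
  if_neg h.not_ge

lemma reward_horizon (hs : s ≤ T) : reward T α s T = T - s := by
  unfold reward
  split_ifs with h
  · simp [le_antisymm hs h]
  · rfl

lemma OPT_horizon (hT : 0 ≤ T) : OPT T α T = T := by
  simp [OPT, hT]

lemma OPT_pos (hT : 0 < T) : 0 < OPT T α θ :=
  hT.trans_le (le_max_left _ _)

lemma reward_div_OPT_horizon_le (hT : 0 < T) (hs : s ≤ T) (h : T - s ≤ c * T) :
    reward T α s T / OPT T α T ≤ c := by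
  rwa [reward_horizon hs, OPT_horizon hT.le, div_le_iff₀ hT]

lemma reward_div_OPT_le_of_sq_eq (hT : 0 < T) (hc : 0 ≤ c) (hαc : 2 ≤ α * T * c ^ 2)
    (hsθ : s < θ) (hθT : θ ≤ T) (hθ : (T - θ) ^ 2 = c * T * (T - s)) :
    reward T α s θ / OPT T α θ ≤ c := by
  rw [reward_of_lt hsθ, div_le_iff₀ (OPT_pos hT)]
  have hd : 0 < T - s := by linarith
  calc T - s ≤ c * (α / 2 * (T - θ) ^ 2) := by rw [hθ]; nlinarith
    _ ≤ c * OPT T α θ := mul_le_mul_of_nonneg_left (le_max_right _ _) hc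

theorem exists_reward_div_OPT_le (hT : 0 < T) (hc₀ : 0 ≤ c) (hαc : 2 ≤ α * T * c ^ 2)
    (hs : s ∈ Set.Icc 0 T) :
    ∃ θ ∈ Set.Icc 0 T, reward T α s θ / OPT T α θ ≤ c := by
  obtain ⟨hs₀, hsT⟩ := hs
  rcases le_or_gt (T - s) (c * T) with hnear | hfar
  · exact ⟨T, ⟨hT.le, le_rfl⟩, reward_div_OPT_horizon_le hT hsT hnear⟩
  · set u := √(c * T * (T - s))
    have hd : 0 < T - s := (mul_nonneg hc₀ hT.le).trans_lt hfar
    have hu₀ : 0 ≤ u := Real.sqrt_nonneg _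
    have hu_lt : u < T - s := (Real.sqrt_lt' hd).2 (by nlinarith)
    have hu_le : u ≤ T := Real.sqrt_le_iff.2 ⟨hT.le, by nlinarith⟩
    refine ⟨T - u, ⟨by linarith, by linarith⟩,
      reward_div_OPT_le_of_sq_eq hT hc₀ hαc (by linarith) (by linarith) ?_⟩
    rw [sub_sub_cancel, Real.sq_sqrt (by positivity)]

end CompetitiveRatio

theorem stmt1_general (T α : ℝ) (hT : 0 < T) (hαT : 2 ≤ α * T) :
    ∀ s' ∈ Set.Icc (0 : ℝ) T, ∃ θ ∈ Set.Icc (0 : ℝ) T,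
      reward T α s' θ / OPT T α θ ≤ Real.sqrt (2 / (α * T)) := by
  intro s' hs'
  have hαT₀ : 0 < α * T := by linarith
  refine exists_reward_div_OPT_le hT (Real.sqrt_nonneg _) ?_ hs'
  rw [Real.sq_sqrt (by positivity), mul_div_cancel₀ _ hαT₀.ne']

theorem stmt1 (T α : ℝ) (hT : 0 < T) (hα : 0 < α) (hαT : 2 ≤ α * T) :
    ∀ s' ∈ Set.Icc (0 : ℝ) T, ∃ θ ∈ Set.Icc (0 : ℝ) T,
      reward T α s' θ / OPT T α θ ≤ Real.sqrt (2 / (α * T)) :=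
  stmt1_general T α hT hαT
end

section
/- For every fixed T > 2, the exploration time E(γ) = ((1 − γ)/2)·(T − γ/2 − (1/2)·√(γ² + 4T(2 − γ))) spent on the striving arm by a γ-comfortable competitive-ratio-maximizing agent is strictly decreasing in γ on [0, 1]. That is, as an agent requires more comfort, they spend strictly less time exploring the striving arm. -/
/-!
Write `r = √(γ² + 4T(2 - γ))` and `s(γ) = T - γ/2 - r/2`. Differentiating gives `s' = s / r`, hence
`E'(γ) = s · ((1 - γ) - r) / (2r)`. For `T > 2` the switch time is positive, because
`(2T - γ)² - r² = 4T(T - 2)`, and on `[0, 1]` we have `r > 1 - γ`, because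
`r² - (1 - γ)² = 8T - 1 - (4T - 2)γ ≥ 4T + 1`. So `E' < 0` on `(0, 1)`.
-/

open Real

namespace CostToStrive

def switchDiscr (T γ : ℝ) : ℝ := γ ^ 2 + 4 * T * (2 - γ)

noncomputable def switchTime (T γ : ℝ) : ℝ := T - γ / 2 - (1 / 2) * √(switchDiscr T γ)

noncomputable def explorationTime (T γ : ℝ) : ℝ := (1 - γ) / 2 * switchTime T γ

variable {T γ : ℝ}

lemma switchDiscr_pos (hT : 0 < T) (hγ : γ < 2) : 0 < switchDiscr T γ := by
  unfold switchDiscr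
  nlinarith [sq_nonneg γ]

lemma hasDerivAt_switchDiscr (T γ : ℝ) : HasDerivAt (switchDiscr T) (2 * γ - 4 * T) γ :=
  ((hasDerivAt_pow 2 γ).fun_add
    (((hasDerivAt_id' (x := γ)).const_sub 2).const_mul (4 * T))).congr_deriv (by norm_num; ring)

lemma switchTime_pos (hT : 2 < T) (hγ : γ < 2 * T) : 0 < switchTime T γ := by
  have hlt : √(switchDiscr T γ) < 2 * T - γ := by
    rw [sqrt_lt' (by linarith), switchDiscr]
    nlinarith
  unfold switchTime
  linarith

lemma one_sub_lt_sqrt_switchDiscr (hT : 1 / 2 ≤ T) (hγ : γ ≤ 1) :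
    1 - γ < √(switchDiscr T γ) := by
  rw [lt_sqrt (by linarith), switchDiscr]
  nlinarith

lemma hasDerivAt_switchTime (hD : 0 < switchDiscr T γ) :
    HasDerivAt (switchTime T) (switchTime T γ / √(switchDiscr T γ)) γ := by
  refine (((hasDerivAt_id' (x := γ)).div_const 2).const_sub T |>.fun_sub
    (((hasDerivAt_switchDiscr T γ).sqrt hD.ne').const_mul (1 / 2))).congr_deriv ?_
  simp only [switchTime]
  field_simp
  ring

lemma hasDerivAt_explorationTime (hD : 0 < switchDiscr T γ) :
    HasDerivAt (explorationTime T)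
      (switchTime T γ * ((1 - γ) - √(switchDiscr T γ)) / (2 * √(switchDiscr T γ))) γ := by
  refine (((hasDerivAt_id' (x := γ)).const_sub 1).div_const 2 |>.fun_mul
    (hasDerivAt_switchTime hD)).congr_deriv ?_
  field_simp
  ring

end CostToStrive

open CostToStrive in
theorem stmt10 (T : ℝ) (hT : 2 < T) :
    StrictAntiOn (fun γ : ℝ =>
      (1 - γ) / 2 *
        (T - γ / 2 - (1 / 2) * Real.sqrt (γ ^ 2 + 4 * T * (2 - γ))))
      (Set.Icc 0 1) := by
  change StrictAntiOn (explorationTime T) (Set.Icc 0 1)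
  refine strictAntiOn_of_deriv_neg (convex_Icc 0 1)
    (by unfold explorationTime switchTime switchDiscr; fun_prop) fun γ hγ => ?_
  rw [interior_Icc] at hγ
  have hD : 0 < switchDiscr T γ := switchDiscr_pos (by linarith) (by linarith [hγ.2])
  rw [(hasDerivAt_explorationTime hD).deriv]
  refine div_neg_of_neg_of_pos (mul_neg_of_pos_of_neg ?_ ?_) (by positivity)
  · exact switchTime_pos hT (by linarith [hγ.2])
  · exact sub_neg.2 (one_sub_lt_sqrt_switchDiscr (by linarith) hγ.2.le)
end

section
/- Fix T ≥ 2. If the threshold θ satisfies (T − √(2T))/2 ≤ θ ≤ T − √(2T), then (1/2)(T − θ)² ≥ T ≥ √(2T). Hence for such θ, the agent with a free-reimbursement safety net, who explores the striving arm for the full duration T − √(2T) and witnesses the increase, earns reward (1/2)(T − θ)² ≥ T, while the agent without a safety net, who can only explore for (T − √(2T))/2 time and thus never witnesses the increase, earns only √(2T). -/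
theorem stmt11_general (T θ : ℝ) (hT : 2 ≤ T)
    (hθ2 : θ ≤ T - Real.sqrt (2 * T)) :
    T ≤ (1 / 2) * (T - θ) ^ 2 ∧ Real.sqrt (2 * T) ≤ T := by
  have hgap : Real.sqrt (2 * T) ≤ T - θ := by linarith
  have hsq : 2 * T ≤ (T - θ) ^ 2 := (Real.sqrt_le_iff.mp hgap).2
  exact ⟨by linarith, Real.sqrt_le_iff.mpr ⟨by linarith, by nlinarith⟩⟩

theorem stmt11 (T θ : ℝ) (hT : 2 ≤ T)
    (hθ1 : (T - Real.sqrt (2 * T)) / 2 ≤ θ)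
    (hθ2 : θ ≤ T - Real.sqrt (2 * T)) :
    T ≤ (1 / 2) * (T - θ) ^ 2 ∧ Real.sqrt (2 * T) ≤ T :=
  stmt11_general T θ hT hθ2
end

section
/- Fix T ≥ 2 and let s = T + 1 − √(4T + 1). Then 0 ≤ s ≤ T and s satisfies (T − s) + (1/2)(T − s)² = 2T; equivalently, with a safety net of R = T units, s equalizes the two worst-case competitive ratios (R − s + T − s)/(R + T) and (R − s + T − s)/(R − s + (1/2)(T − s)²). -/
/-! With `u = T - s = √(4T + 1) - 1` we have `(u + 1)² = 4T + 1`, which is the quadratic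
`u + u²/2 = 2T`; so both ratios share the denominator `2T`. The bounds `0 ≤ s ≤ T` amount to
`1 ≤ √(4T + 1) ≤ T + 1`, and the upper one is `T² ≥ 2T`. -/

lemma sqrt_four_mul_add_one_le {T : ℝ} (hT : 2 ≤ T) : √(4 * T + 1) ≤ T + 1 :=
  Real.sqrt_le_iff.mpr ⟨by linarith, by nlinarith⟩

lemma one_le_sqrt_four_mul_add_one {T : ℝ} (hT : 0 ≤ T) : 1 ≤ √(4 * T + 1) :=
  Real.one_le_sqrt.mpr (by linarith)

lemma add_half_sq_eq_of_add_one_sq_eq {u c : ℝ} (h : (u + 1) ^ 2 = 2 * c + 1) :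
    u + 1 / 2 * u ^ 2 = c := by
  linear_combination h / 2

theorem stmt13 (T : ℝ) (hT : 2 ≤ T) (s : ℝ)
    (hs : s = T + 1 - Real.sqrt (4 * T + 1)) :
    (0 ≤ s ∧ s ≤ T) ∧ (T - s) + (1 / 2) * (T - s) ^ 2 = 2 * T ∧
    (T - s + (T - s)) / (T + T) =
      (T - s + (T - s)) / (T - s + (1 / 2) * (T - s) ^ 2) := by
  have hgap : T - s + 1 = √(4 * T + 1) := by rw [hs]; ring
  have hquad : (T - s) + (1 / 2) * (T - s) ^ 2 = 2 * T :=
    add_half_sq_eq_of_add_one_sq_eq <| by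
      rw [hgap, Real.sq_sqrt (by linarith)]; ring
  have hupper := sqrt_four_mul_add_one_le hT
  have hlower := one_le_sqrt_four_mul_add_one (by linarith : 0 ≤ T)
  refine ⟨⟨by linarith, by linarith⟩, hquad, ?_⟩
  rw [hquad, two_mul]
end
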